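/- Under the stationary AR(1) process with |ρ| < 1, variance σ²/(1−ρ²) and autocorrelation ρ_k = ρ^k, the ratio SR(q)/SR for q-period returns equals sqrt(q / (1 + (2ρ/(1−ρ))·(1 − (1−ρ^q)/(q(1−ρ))))) for every integer q ≥ 1, provided the denominator inside the square root is positive. -/

import Mathlib

/-
By bilinearity of covariance, the variance of the `q`-period return is `σ² / (1 - ρ²)` times
`∑_{i,j<q} ρ^|i-j|`, and `(1 - ρ)²` times this double sum is `q (1 - ρ²) - 2ρ (1 - ρ^q)`, i.e.
the double sum is `q D` with `D` the denominator in the statement. The ratio of Sharpe ratios is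
then `q / √(q D) = √(q / D)`.
-/

open MeasureTheory ProbabilityTheory Finset

/-- Covariance of two real random variables. -/
noncomputable def cov {Ω : Type*} [MeasurableSpace Ω] (X Y : Ω → ℝ) (μ : Measure Ω) : ℝ :=
  ∫ ω, (X ω - ∫ x, X x ∂μ) * (Y ω - ∫ x, Y x ∂μ) ∂μ

/-- Correlation of two real random variables. -/
noncomputable def corr {Ω : Type*} [MeasurableSpace Ω] (X Y : Ω → ℝ) (μ : Measure Ω) : ℝ :=
  cov X Y μ / (Real.sqrt (variance X μ) * Real.sqrt (variance Y μ))

section Moments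

variable {Ω : Type*} [MeasurableSpace Ω] {μ : Measure Ω}

theorem cov_eq_covariance (X Y : Ω → ℝ) : cov X Y μ = covariance X Y μ := rfl

theorem covariance_eq_corr_mul {X Y : Ω → ℝ} {V : ℝ} (hV : 0 < V)
    (hX : variance X μ = V) (hY : variance Y μ = V) :
    covariance X Y μ = corr X Y μ * V := by
  rw [corr, hX, hY, Real.mul_self_sqrt hV.le, div_mul_cancel₀ _ hV.ne', cov_eq_covariance]

theorem variance_sum_eq_mul_sum_sum_corr [IsFiniteMeasure μ] {ι : Type*} {X : ι → Ω → ℝ}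
    {s : Finset ι} (hX : ∀ i ∈ s, MemLp (X i) 2 μ) {V : ℝ} (hV : 0 < V)
    (hvar : ∀ i ∈ s, variance (X i) μ = V) :
    variance (fun ω => ∑ i ∈ s, X i ω) μ = V * ∑ i ∈ s, ∑ j ∈ s, corr (X i) (X j) μ := by
  have hsum : MemLp (fun ω => ∑ i ∈ s, X i ω) 2 μ := memLp_finsetSum s hX
  rw [← covariance_self hsum.aemeasurable, covariance_fun_sum_fun_sum' hX hX, mul_sum]
  refine sum_congr rfl fun i hi => ?_
  rw [mul_sum]
  exact sum_congr rfl fun j hj =>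
    (covariance_eq_corr_mul hV (hvar i hi) (hvar j hj)).trans (mul_comm _ _)

end Moments

section PowDist

variable {K : Type*} [CommRing K]

theorem sum_range_pow_natAbs_sub_mul (x : K) (n : ℕ) :
    (∑ i ∈ range n, x ^ ((i : ℤ) - n).natAbs) * (1 - x) = x * (1 - x ^ n) := by
  have hpow : ∀ i ∈ range n, x ^ ((i : ℤ) - n).natAbs = x * x ^ (n - 1 - i) := by
    intro i hi
    rw [← pow_succ']
    congr 1
    have := mem_range.mp hi
    omega
  rw [sum_congr rfl hpow, ← mul_sum, sum_range_reflect (x ^ ·), mul_assoc, geom_sum_mul_neg]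

theorem sum_range_sum_range_pow_natAbs_sub_mul (x : K) (q : ℕ) :
    (∑ i ∈ range q, ∑ j ∈ range q, x ^ ((i : ℤ) - j).natAbs) * (1 - x) ^ 2
      = q * (1 - x ^ 2) - 2 * x * (1 - x ^ q) := by
  induction q with
  | zero => simp
  | succ n ih =>
    have hsymm : ∑ j ∈ range n, x ^ ((n : ℤ) - j).natAbs
        = ∑ i ∈ range n, x ^ ((i : ℤ) - n).natAbs := by
      simp_rw [← Int.natAbs_neg (_ - (n : ℤ)), neg_sub]
    simp only [sum_range_succ, sum_add_distrib, sub_self, Int.natAbs_zero, pow_zero, hsymm]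
    push_cast
    linear_combination ih + 2 * (1 - x) * sum_range_pow_natAbs_sub_mul x n

end PowDist

theorem sum_range_sum_range_pow_natAbs_sub {ρ : ℝ} (hρ : ρ ≠ 1) (q : ℕ) :
    ∑ i ∈ range q, ∑ j ∈ range q, ρ ^ ((i : ℤ) - j).natAbs
      = q * (1 + (2 * ρ / (1 - ρ)) * (1 - (1 - ρ ^ q) / ((q : ℝ) * (1 - ρ)))) := by
  have hρ' : 1 - ρ ≠ 0 := sub_ne_zero.mpr hρ.symm
  rw [← mul_left_inj' (pow_ne_zero 2 hρ'), sum_range_sum_range_pow_natAbs_sub_mul]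
  rcases Nat.eq_zero_or_pos q with rfl | hq
  · simp
  have hq' : (q : ℝ) ≠ 0 := by positivity
  field_simp
  ring

theorem div_sqrt_mul_div_div_sqrt {q c V D : ℝ} (hq : 0 ≤ q) (hc : c ≠ 0) (hV : 0 < V)
    (hD : 0 < D) :
    q * c / √(V * (q * D)) / (c / √V) = √(q / D) := by
  have hsV := Real.sqrt_pos.mpr hV
  have hsD := Real.sqrt_pos.mpr hD
  rw [Real.sqrt_mul hV.le, Real.sqrt_mul hq, Real.sqrt_div' _ hD.le]
  rcases hq.eq_or_lt with rfl | hq_pos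
  · simp
  have hsq := Real.sqrt_pos.mpr hq_pos
  field_simp
  rw [Real.sq_sqrt hq]

theorem sharpe_ratio_q_period_ar1_general
    {Ω : Type*} [MeasurableSpace Ω] (μ : Measure Ω) [IsProbabilityMeasure μ]
    (R : ℤ → Ω → ℝ) (σ μR Rf ρ : ℝ) (t : ℤ) (q : ℕ)
    (hL2 : ∀ u : ℤ, MemLp (R u) 2 μ)
    (hσ : 0 < σ) (hρ : |ρ| < 1)
    (hvar : ∀ u : ℤ, variance (R u) μ = σ ^ 2 / (1 - ρ ^ 2))
    (hcorr : ∀ u v : ℤ, corr (R u) (R v) μ = ρ ^ ((v - u).natAbs))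
    (hμ : μR ≠ Rf)
    (hpos : 0 < 1 + (2 * ρ / (1 - ρ)) * (1 - (1 - ρ ^ q) / ((q : ℝ) * (1 - ρ)))) :
    ((q : ℝ) * (μR - Rf) / Real.sqrt (variance (fun ω => ∑ i ∈ range q, R (t - i) ω) μ))
        / ((μR - Rf) / Real.sqrt (σ ^ 2 / (1 - ρ ^ 2)))
      = Real.sqrt ((q : ℝ) /
          (1 + (2 * ρ / (1 - ρ)) * (1 - (1 - ρ ^ q) / ((q : ℝ) * (1 - ρ))))) := by
  have hρ1 : ρ ≠ 1 := fun h => by simp [h] at hρ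
  have hV : 0 < σ ^ 2 / (1 - ρ ^ 2) := by
    have : ρ ^ 2 < 1 := by simpa using (sq_lt_one_iff_abs_lt_one ρ).mpr hρ
    exact div_pos (by positivity) (by linarith)
  have hlag : ∀ i j : ℕ, (t - j - (t - i)).natAbs = ((i : ℤ) - j).natAbs := fun i j => by
    congr 1; ring
  rw [variance_sum_eq_mul_sum_sum_corr (fun i _ => hL2 _) hV (fun i _ => hvar _)]
  simp only [hcorr, hlag]
  rw [sum_range_sum_range_pow_natAbs_sub hρ1]
  exact div_sqrt_mul_div_div_sqrt q.cast_nonneg (sub_ne_zero.mpr hμ) hV hpos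

theorem sharpe_ratio_q_period_ar1
    {Ω : Type*} [MeasurableSpace Ω] (μ : Measure Ω) [IsProbabilityMeasure μ]
    (R : ℤ → Ω → ℝ) (σ μR Rf ρ : ℝ) (t : ℤ) (q : ℕ) (hq : 1 ≤ q)
    (hL2 : ∀ u : ℤ, MemLp (R u) 2 μ)
    (hσ : 0 < σ) (hρ : |ρ| < 1)
    (hmean : ∀ u : ℤ, ∫ ω, R u ω ∂μ = μR)
    (hvar : ∀ u : ℤ, variance (R u) μ = σ ^ 2 / (1 - ρ ^ 2))
    (hcorr : ∀ u v : ℤ, corr (R u) (R v) μ = ρ ^ ((v - u).natAbs))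
    (hμ : μR ≠ Rf)
    (hpos : 0 < 1 + (2 * ρ / (1 - ρ)) * (1 - (1 - ρ ^ q) / ((q : ℝ) * (1 - ρ)))) :
    ((q : ℝ) * (μR - Rf) / Real.sqrt (variance (fun ω => ∑ i ∈ range q, R (t - i) ω) μ))
        / ((μR - Rf) / Real.sqrt (σ ^ 2 / (1 - ρ ^ 2)))
      = Real.sqrt ((q : ℝ) /
          (1 + (2 * ρ / (1 - ρ)) * (1 - (1 - ρ ^ q) / ((q : ℝ) * (1 - ρ))))) :=
  sharpe_ratio_q_period_ar1_general μ R σ μR Rf ρ t q hL2 hσ hρ hvar hcorr hμ hpos
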